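/- arXiv:1607.08495 — 5 statements merged into one kernel-verified Lean document; each statement's English description precedes it below -/
import Mathlib

section
/- Let λ ⊂ μ be partitions and n an integer. Suppose μ differs from λ only in row j (for some j ≥ 1), i.e. μᵢ = λᵢ for all i ≠ j and μⱼ > λⱼ, and the last box added in row j has content μⱼ - j = n - |λ| (so (λ,μ) form an n-pair). Then, writing x = λ_[n] + ρ and y = μ_[n] + ρ, we have y = s_{0,j}(x), where s_{0,j} swaps coordinates 0 and j. -/
/-- Standard basis vector of `ℤ^∞`. -/
def eps (m : ℕ) : ℕ → ℤ := fun i => if i = m then 1 else 0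

/-- Transposition of coordinates `0` and `j` acting on `ℤ^∞`. -/
def swap0 (j : ℕ) (x : ℕ → ℤ) : ℕ → ℤ :=
  fun i => if i = 0 then x j else if i = j then x 0 else x i

/-- The tail coordinates `x₁ > x₂ > ⋯` are strictly decreasing. -/
def StrictTail (x : ℕ → ℤ) : Prop := ∀ i, 1 ≤ i → x (i + 1) < x i

/-- `x` is on the `j`-th wall (`j ≥ 1`). -/
def OnWall (x : ℕ → ℤ) (j : ℕ) : Prop := 1 ≤ j ∧ x 0 = x j

/-- `x` is in the `j`-th alcove: for `j = 1` this means `x₀ > x₁`;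
for `j > 1` it means `x_{j-1} > x₀ > x_j`. -/
def InAlcove (x : ℕ → ℤ) (j : ℕ) : Prop :=
  1 ≤ j ∧ (j = 1 → x 1 < x 0) ∧ (1 < j → x j < x 0 ∧ x 0 < x (j - 1))

/-- `x` is in the first alcove: all coordinates strictly decreasing. -/
def InFirstAlcove (x : ℕ → ℤ) : Prop := ∀ i, x (i + 1) < x i

/-- A partition, recorded as a finitely supported function with `λ_i` the `i`-th part
(for `i ≥ 1`; the value at `0` is unused and required to be `0`). -/
def IsPartition (l : ℕ →₀ ℕ) : Prop := l 0 = 0 ∧ ∀ i, 1 ≤ i → l (i + 1) ≤ l i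

/-- `|λ| = Σᵢ λᵢ`. -/
def psize (l : ℕ →₀ ℕ) : ℕ := l.sum fun _ v => v

/-- `λ_[n] = (n - |λ|, λ₁, λ₂, …) ∈ ℤ^∞`. -/
def lamBr (l : ℕ →₀ ℕ) (n : ℤ) : ℕ → ℤ :=
  fun i => if i = 0 then n - psize l else (l i : ℤ)

/-- `ρ = (0, -1, -2, -3, …)`. -/
def rho : ℕ → ℤ := fun i => -(i : ℤ)

/-- `λ_[n] + ρ`. -/
def vec (l : ℕ →₀ ℕ) (n : ℤ) : ℕ → ℤ := fun i => lamBr l n i + rho i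

/-- The embedding `φ_n` of the branching graph: `(λ,k) ↦ λ_[n]+ρ` for `k` even,
`λ_[n-1]+ρ` for `k` odd. -/
def phi (n : ℤ) (l : ℕ →₀ ℕ) (k : ℕ) : ℕ → ℤ :=
  if k % 2 = 0 then vec l n else vec l (n - 1)

/-- A vertex `(λ, k)` of the branching graph `Y`: `λ ⊢ l ≤ ⌊k/2⌋`. -/
def IsVertex (l : ℕ →₀ ℕ) (k : ℕ) : Prop := IsPartition l ∧ psize l ≤ k / 2

/-- An edge `(μ, k-1) → (λ, k)` of the branching graph `Y`: either `λ = μ`,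
or `k` even and `λ = μ ∪ {a}` for an addable node `a`, or `k` odd and
`λ = μ \ {a}` for a removable node `a`. -/
def BrEdge (mu lam : ℕ →₀ ℕ) (k : ℕ) : Prop :=
  lam = mu ∨
    (k % 2 = 0 ∧ ∃ j, 1 ≤ j ∧ (∀ m, m ≠ j → lam m = mu m) ∧ lam j = mu j + 1) ∨
    (k % 2 = 1 ∧ ∃ j, 1 ≤ j ∧ (∀ m, m ≠ j → lam m = mu m) ∧ mu j = lam j + 1)

theorem psize_update_add (l : ℕ →₀ ℕ) (j a : ℕ) :
    psize (l.update j a) + l j = psize l + a :=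
  Finsupp.sum_update_add l j a (fun _ v => v) (fun _ => rfl) (fun _ _ _ => rfl)

theorem psize_add_of_eq_off {l m : ℕ →₀ ℕ} {j : ℕ} (hrows : ∀ i, i ≠ j → m i = l i) :
    psize m + l j = psize l + m j := by
  have hupd : m = l.update j (m j) := by
    ext i
    by_cases h : i = j
    · simp [h]
    · simp [Finsupp.update_apply, h, hrows i h]
  rw [hupd, psize_update_add, Finsupp.update_apply, if_pos rfl]

theorem vec_zero (l : ℕ →₀ ℕ) (n : ℤ) : vec l n 0 = n - psize l := by
  simp [vec, lamBr, rho]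

theorem vec_of_ne_zero (l : ℕ →₀ ℕ) (n : ℤ) {i : ℕ} (hi : i ≠ 0) : vec l n i = l i - i := by
  simp [vec, lamBr, rho, hi, sub_eq_add_neg]

theorem stmt2_general (l m : ℕ →₀ ℕ) (n : ℤ)
    (j : ℕ) (hj : 1 ≤ j)
    (hrows : ∀ i, i ≠ j → m i = l i)
    (hcont : (m j : ℤ) - j = n - psize l) :
    vec m n = swap0 j (vec l n) := by
  have hj0 : j ≠ 0 := by omega
  have hsize : (psize m : ℤ) + l j = psize l + m j := by exact_mod_cast psize_add_of_eq_off hrows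
  funext i
  rcases eq_or_ne i 0 with rfl | hi0
  · simp only [swap0, if_true, vec_zero, vec_of_ne_zero _ _ hj0]
    omega
  rcases eq_or_ne i j with rfl | hij
  · simp only [swap0, if_neg hi0, if_true, vec_zero, vec_of_ne_zero _ _ hi0]
    omega
  · simp only [swap0, if_neg hi0, if_neg hij, vec_of_ne_zero _ _ hi0, hrows i hij]

theorem stmt2 (l m : ℕ →₀ ℕ) (hl : IsPartition l) (hm : IsPartition m) (n : ℤ)
    (j : ℕ) (hj : 1 ≤ j)
    (hrows : ∀ i, i ≠ j → m i = l i) (hlt : l j < m j)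
    (hcont : (m j : ℤ) - j = n - psize l) :
    vec m n = swap0 j (vec l n) :=
  stmt2_general l m n j hj hrows hcont
end

section
/- Let x, y ∈ ℤ^∞ with strictly decreasing tails (x₁>x₂>⋯ and y₁>y₂>⋯), each in an alcove or on a wall. Assume x is in the j-th alcove and y = x ± ε_m for some m ≥ 0 (i.e. y differs from x by adding or subtracting 1 in a single coordinate). Then exactly one of the following holds: (1) y is in the j-th alcove; (2) y is on the j-th wall, and y = x + ε_j or y = x − ε₀; (3) y is on the (j−1)-th wall, and y = x + ε₀ or y = x − ε_{j−1}. -/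
/-!
A unit step `±ε_m` changes each of the gaps `x₀ - x_j` and `x_{j-1} - x₀` by at most one, and
only `+ε_j`, `-ε₀` shrink the first while only `+ε₀`, `-ε_{j-1}` shrink the second. So a step out
of the `j`-th alcove lands on one of its two bounding walls, and which one is read off from the
step. The three outcomes are exclusive: an alcove point lies on neither wall, and `y₀ = y_j` and
`y₀ = y_{j-1}` together contradict the strictly decreasing tail of `y`.
-/

section

variable {x : ℕ → ℤ} {j : ℕ}

theorem inAlcove_one_iff : InAlcove x 1 ↔ x 1 < x 0 := by
  simp [InAlcove]

theorem inAlcove_iff_of_one_lt (hj : 1 < j) :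
    InAlcove x j ↔ x j < x 0 ∧ x 0 < x (j - 1) := by
  simp [InAlcove, hj, hj.le, hj.ne']

theorem InAlcove.not_onWall (hx : InAlcove x j) : ¬OnWall x j := by
  rintro ⟨-, hw⟩
  rcases hx.1.eq_or_lt with rfl | hj
  · exact (inAlcove_one_iff.mp hx).ne' hw
  · exact ((inAlcove_iff_of_one_lt hj).mp hx).1.ne' hw

theorem InAlcove.not_onWall_sub_one (hx : InAlcove x j) :
    ¬OnWall x (j - 1) := by
  rintro ⟨hj, hw⟩
  exact ((inAlcove_iff_of_one_lt (Nat.lt_of_le_sub_one hx.1 hj)).mp hx).2.ne hw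

theorem StrictTail.not_onWall_sub_one (hx : StrictTail x)
    (hw : OnWall x j) : ¬OnWall x (j - 1) := by
  obtain ⟨hj, hw⟩ := hw
  rintro ⟨hj', hw'⟩
  have hlt := hx (j - 1) hj'
  rw [Nat.sub_add_cancel hj] at hlt
  omega

theorem InAlcove.add_eps (hx : InAlcove x j) (m : ℕ) :
    InAlcove (fun i => x i + eps m i) j ∨ (OnWall (fun i => x i + eps m i) j ∧ m = j) ∨
      (OnWall (fun i => x i + eps m i) (j - 1) ∧ m = 0) := by
  rcases hx.1.eq_or_lt with rfl | hj
  · rw [inAlcove_one_iff] at hx ⊢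
    simp only [OnWall, eps]
    split_ifs <;> omega
  · rw [inAlcove_iff_of_one_lt hj] at hx ⊢
    simp only [OnWall, eps]
    split_ifs <;> omega

theorem InAlcove.sub_eps (hx : InAlcove x j) (m : ℕ) :
    InAlcove (fun i => x i - eps m i) j ∨ (OnWall (fun i => x i - eps m i) j ∧ m = 0) ∨
      (OnWall (fun i => x i - eps m i) (j - 1) ∧ m = j - 1) := by
  rcases hx.1.eq_or_lt with rfl | hj
  · rw [inAlcove_one_iff] at hx ⊢
    simp only [OnWall, eps]
    split_ifs <;> omega
  · rw [inAlcove_iff_of_one_lt hj] at hx ⊢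
    simp only [OnWall, eps]
    split_ifs <;> omega

end

theorem stmt5_general (x y : ℕ → ℤ) (j m : ℕ)
    (hyt : StrictTail y)
    (hx : InAlcove x j)
    (hstep : (y = fun i => x i + eps m i) ∨ (y = fun i => x i - eps m i)) :
    (InAlcove y j ∧
        ¬ (OnWall y j ∧ ((y = fun i => x i + eps j i) ∨ (y = fun i => x i - eps 0 i))) ∧
        ¬ (OnWall y (j - 1) ∧
            ((y = fun i => x i + eps 0 i) ∨ (y = fun i => x i - eps (j - 1) i)))) ∨
      (¬ InAlcove y j ∧
        (OnWall y j ∧ ((y = fun i => x i + eps j i) ∨ (y = fun i => x i - eps 0 i))) ∧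
        ¬ (OnWall y (j - 1) ∧
            ((y = fun i => x i + eps 0 i) ∨ (y = fun i => x i - eps (j - 1) i)))) ∨
      (¬ InAlcove y j ∧
        ¬ (OnWall y j ∧ ((y = fun i => x i + eps j i) ∨ (y = fun i => x i - eps 0 i))) ∧
        (OnWall y (j - 1) ∧
            ((y = fun i => x i + eps 0 i) ∨ (y = fun i => x i - eps (j - 1) i)))) := by
  have hcases : InAlcove y j ∨
      (OnWall y j ∧ ((y = fun i => x i + eps j i) ∨ (y = fun i => x i - eps 0 i))) ∨
      (OnWall y (j - 1) ∧
        ((y = fun i => x i + eps 0 i) ∨ (y = fun i => x i - eps (j - 1) i))) := by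
    rcases hstep with rfl | rfl
    · rcases hx.add_eps m with h | ⟨hw, rfl⟩ | ⟨hw, rfl⟩
      exacts [Or.inl h, Or.inr (Or.inl ⟨hw, Or.inl rfl⟩), Or.inr (Or.inr ⟨hw, Or.inl rfl⟩)]
    · rcases hx.sub_eps m with h | ⟨hw, rfl⟩ | ⟨hw, rfl⟩
      exacts [Or.inl h, Or.inr (Or.inl ⟨hw, Or.inr rfl⟩), Or.inr (Or.inr ⟨hw, Or.inr rfl⟩)]
  rcases hcases with h | h | h
  · exact Or.inl ⟨h, fun h' => h.not_onWall h'.1, fun h' => h.not_onWall_sub_one h'.1⟩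
  · exact Or.inr (Or.inl ⟨fun h' => h'.not_onWall h.1, h,
      fun h' => hyt.not_onWall_sub_one h.1 h'.1⟩)
  · exact Or.inr (Or.inr ⟨fun h' => h'.not_onWall_sub_one h.1,
      fun h' => hyt.not_onWall_sub_one h'.1 h.1, h⟩)

theorem stmt5 (x y : ℕ → ℤ) (j m : ℕ)
    (hxt : StrictTail x) (hyt : StrictTail y)
    (hx : InAlcove x j)
    (hy : ∃ i, 1 ≤ i ∧ (InAlcove y i ∨ OnWall y i))
    (hstep : (y = fun i => x i + eps m i) ∨ (y = fun i => x i - eps m i)) :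
    (InAlcove y j ∧
        ¬ (OnWall y j ∧ ((y = fun i => x i + eps j i) ∨ (y = fun i => x i - eps 0 i))) ∧
        ¬ (OnWall y (j - 1) ∧
            ((y = fun i => x i + eps 0 i) ∨ (y = fun i => x i - eps (j - 1) i)))) ∨
      (¬ InAlcove y j ∧
        (OnWall y j ∧ ((y = fun i => x i + eps j i) ∨ (y = fun i => x i - eps 0 i))) ∧
        ¬ (OnWall y (j - 1) ∧
            ((y = fun i => x i + eps 0 i) ∨ (y = fun i => x i - eps (j - 1) i)))) ∨
      (¬ InAlcove y j ∧
        ¬ (OnWall y j ∧ ((y = fun i => x i + eps j i) ∨ (y = fun i => x i - eps 0 i))) ∧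
        (OnWall y (j - 1) ∧
            ((y = fun i => x i + eps 0 i) ∨ (y = fun i => x i - eps (j - 1) i)))) :=
  stmt5_general x y j m hyt hx hstep
end

section
/- Let x, y ∈ ℤ^∞ both with strictly decreasing tails. Suppose y = s_{0,j}(x) with x ≠ y, and suppose x' = x ± ε_u and y' = y ± ε_v (same choice of sign not required) for some coordinates u, v, such that x'_u = y'_v (the changed entries agree). If {u, v} = {0, j} (one of u,v equals 0 and the other equals j), then y' = s_{0,j}(x'). -/
/-! The transposition `s = s_{0,j}` carries `x + c ε_u` to `s x + c ε_{s u}`, so for `{u, v} = {0, j}`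
both `y'` and `s x'` are `y` moved by one unit in coordinate `v`; comparing the changed entries
`x'_u = y'_v` shows that the two moves have the same sign. -/

theorem swap0_zero (x : ℕ → ℤ) : swap0 0 x = x := by
  funext i
  by_cases hi : i = 0 <;> simp [swap0, hi]

theorem swap0_add_eps_zero {j : ℕ} (hj : j ≠ 0) (x : ℕ → ℤ) (c : ℤ) :
    swap0 j (fun i => x i + c * eps 0 i) = fun i => swap0 j x i + c * eps j i := by
  funext i
  rcases eq_or_ne i 0 with rfl | hi
  · simp [swap0, eps, hj, hj.symm]
  rcases eq_or_ne i j with rfl | hij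
  · simp [swap0, eps, hi]
  · simp [swap0, eps, hi, hij]

theorem swap0_add_eps_self (j : ℕ) (x : ℕ → ℤ) (c : ℤ) :
    swap0 j (fun i => x i + c * eps j i) = fun i => swap0 j x i + c * eps 0 i := by
  funext i
  rcases eq_or_ne i 0 with rfl | hi
  · simp [swap0, eps]
  rcases eq_or_ne i j with rfl | hij
  · simp [swap0, eps, hi, hi.symm]
  · simp [swap0, eps, hi, hij]

theorem stmt7_general (x y x' y' : ℕ → ℤ) (j u v : ℕ) (δ δ' : ℤ)
    (hswap : y = swap0 j x) (hne : x ≠ y)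
    (hx' : x' = fun i => x i + δ * eps u i) (hy' : y' = fun i => y i + δ' * eps v i)
    (hres : x' u = y' v)
    (huv : (u = 0 ∧ v = j) ∨ (u = j ∧ v = 0)) :
    y' = swap0 j x' := by
  have hj : j ≠ 0 := by
    rintro rfl
    exact hne (hswap.trans (swap0_zero x)).symm
  subst hswap hx' hy'
  rcases huv with ⟨rfl, rfl⟩ | ⟨rfl, rfl⟩
  · have hδ : δ' = δ := by simpa [swap0, eps, hj] using hres.symm
    rw [swap0_add_eps_zero hj, hδ]
  · have hδ : δ' = δ := by simpa [swap0, eps, hj] using hres.symm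
    rw [swap0_add_eps_self, hδ]

theorem stmt7 (x y x' y' : ℕ → ℤ) (j u v : ℕ) (δ δ' : ℤ)
    (hxt : StrictTail x) (hyt : StrictTail y)
    (hswap : y = swap0 j x) (hne : x ≠ y)
    (hδ : δ = 1 ∨ δ = -1) (hδ' : δ' = 1 ∨ δ' = -1)
    (hx' : x' = fun i => x i + δ * eps u i) (hy' : y' = fun i => y i + δ' * eps v i)
    (hres : x' u = y' v)
    (huv : (u = 0 ∧ v = j) ∨ (u = j ∧ v = 0)) :
    y' = swap0 j x' :=
  stmt7_general x y x' y' j u v δ δ' hswap hne hx' hy' hres huv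
end

section
/- Let t be a path of length k in the branching graph with t(k) = (λ, k) and |λ| = ⌊k/2⌋. Then every step of t strictly alternates: for i even, t(i) = t(i−1) ∪ {a} (a box is added), and for i odd, t(i) = t(i−1) (the partition is unchanged). Equivalently, in the embedded graph, φ_n(t(i)) = φ_n(t(i−1)) + ε_j for some j ≥ 1 when i is even, and φ_n(t(i)) = φ_n(t(i−1)) − ε₀ when i is odd. -/
/-!
Along an edge of `Y` the size `|λ|` grows by at most one, and only at even steps. A vertex at
step `i` has `|λ| ≤ ⌊i/2⌋`, so if the end of the path reaches `⌊k/2⌋`, then going backwards every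
step must have been tight: `|t(i)| = ⌊i/2⌋` for all `i ≤ k`. Hence every even step adds a box and
every odd step is stationary, and the image under `φ_n` moves by `ε_j`, resp. `-ε₀`.
-/

lemma psize_eq_add_one_of_addBox {lam mu : ℕ →₀ ℕ} {j : ℕ}
    (hm : ∀ m, m ≠ j → lam m = mu m) (hj : lam j = mu j + 1) :
    psize lam = psize mu + 1 := by
  have hlam : lam = mu + Finsupp.single j 1 := by
    ext m
    by_cases hmj : m = j
    · subst hmj; simp [hj]
    · simp [hm m hmj, Ne.symm hmj]
  rw [hlam, psize, Finsupp.sum_add_index' (fun _ => rfl) (fun _ _ _ => rfl)]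
  simp [psize, Finsupp.sum_single_index]

lemma BrEdge.psize_le {mu lam : ℕ →₀ ℕ} {k : ℕ} (h : BrEdge mu lam k) :
    psize lam ≤ psize mu + 1 ∧ (k % 2 = 1 → psize lam ≤ psize mu) := by
  rcases h with rfl | ⟨heven, j, -, hm, hj⟩ | ⟨-, j, -, hm, hj⟩
  · omega
  · have := psize_eq_add_one_of_addBox hm hj
    omega
  · have := psize_eq_add_one_of_addBox (fun m hmj => (hm m hmj).symm) hj
    omega

lemma psize_eq_half_of_maximal (k : ℕ) (t : ℕ → (ℕ →₀ ℕ))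
    (hv : ∀ i, i ≤ k → psize (t i) ≤ i / 2)
    (hedge : ∀ i, 1 ≤ i → i ≤ k → BrEdge (t (i - 1)) (t i) i)
    (hmax : psize (t k) = k / 2) :
    ∀ i, i ≤ k → psize (t i) = i / 2 := by
  intro i hik
  induction hik using Nat.decreasingInduction with
  | self => exact hmax
  | of_succ i hik ih =>
    have hle := (hedge (i + 1) (by omega) hik).psize_le
    have hvi := hv i (by omega)
    simp only [Nat.add_sub_cancel] at hle
    omega

lemma vec_of_addBox {lam mu : ℕ →₀ ℕ} {j : ℕ} (n : ℤ) (hj1 : 1 ≤ j)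
    (hm : ∀ m, m ≠ j → lam m = mu m) (hj : lam j = mu j + 1) :
    vec lam n = fun m => vec mu (n - 1) m + eps j m := by
  have hsize := psize_eq_add_one_of_addBox hm hj
  funext m
  simp only [vec, lamBr, rho, eps]
  rcases Nat.eq_zero_or_pos m with rfl | hm0
  · simp only [↓reduceIte, hsize, Nat.cast_add, Nat.cast_one, CharP.cast_eq_zero, neg_zero,
      add_zero, show (0 : ℕ) ≠ j by omega]
    ring
  · by_cases hmj : m = j
    · subst hmj
      simp only [hm0.ne', ↓reduceIte, hj, Nat.cast_add, Nat.cast_one]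
      ring
    · simp [hm0.ne', hmj, hm m hmj]

lemma vec_sub_one (l : ℕ →₀ ℕ) (n : ℤ) :
    vec l (n - 1) = fun m => vec l n m - eps 0 m := by
  funext m
  by_cases hm0 : m = 0
  · simp only [vec, lamBr, hm0, ↓reduceIte, rho, CharP.cast_eq_zero, neg_zero, add_zero, eps]
    ring
  · simp [vec, lamBr, eps, hm0]

theorem stmt16_general (n : ℤ) (k : ℕ) (t : ℕ → (ℕ →₀ ℕ))
    (hv : ∀ i, i ≤ k → IsVertex (t i) i)
    (hedge : ∀ i, 1 ≤ i → i ≤ k → BrEdge (t (i - 1)) (t i) i)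
    (hmax : psize (t k) = k / 2) :
    ∀ i, 1 ≤ i → i ≤ k →
      (i % 2 = 0 → ∃ j, 1 ≤ j ∧ (∀ m, m ≠ j → t i m = t (i - 1) m) ∧
        t i j = t (i - 1) j + 1 ∧
        phi n (t i) i = fun m => phi n (t (i - 1)) (i - 1) m + eps j m) ∧
      (i % 2 = 1 → t i = t (i - 1) ∧
        phi n (t i) i = fun m => phi n (t (i - 1)) (i - 1) m - eps 0 m) := by
  intro i hi1 hik
  have hsize := psize_eq_half_of_maximal k t (fun i hi => (hv i hi).2) hedge hmax
  have hsize_i := hsize i hik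
  have hsize_pred := hsize (i - 1) (by omega)
  refine ⟨fun heven => ?_, fun hodd => ?_⟩
  · have hpred : (i - 1) % 2 = 1 := by omega
    rcases hedge i hi1 hik with he | ⟨-, j, hj1, hm, hj⟩ | ⟨hodd, -⟩
    · rw [he] at hsize_i; omega
    · refine ⟨j, hj1, hm, hj, ?_⟩
      simp only [phi, heven, hpred, if_true, one_ne_zero, if_false]
      exact vec_of_addBox n hj1 hm hj
    · omega
  · have hpred : (i - 1) % 2 = 0 := by omega
    rcases hedge i hi1 hik with he | ⟨heven, -⟩ | ⟨-, j, -, hm, hj⟩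
    · refine ⟨he, ?_⟩
      simp only [phi, hodd, hpred, if_true, one_ne_zero, if_false, he]
      exact vec_sub_one _ n
    · omega
    · have := psize_eq_add_one_of_addBox (fun m hmj => (hm m hmj).symm) hj
      omega

theorem stmt16 (n : ℤ) (k : ℕ) (t : ℕ → (ℕ →₀ ℕ)) (ht0 : t 0 = 0)
    (hv : ∀ i, i ≤ k → IsVertex (t i) i)
    (hedge : ∀ i, 1 ≤ i → i ≤ k → BrEdge (t (i - 1)) (t i) i)
    (hmax : psize (t k) = k / 2) :
    ∀ i, 1 ≤ i → i ≤ k →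
      (i % 2 = 0 → ∃ j, 1 ≤ j ∧ (∀ m, m ≠ j → t i m = t (i - 1) m) ∧
        t i j = t (i - 1) j + 1 ∧
        phi n (t i) i = fun m => phi n (t (i - 1)) (i - 1) m + eps j m) ∧
      (i % 2 = 1 → t i = t (i - 1) ∧
        phi n (t i) i = fun m => phi n (t (i - 1)) (i - 1) m - eps 0 m) :=
  stmt16_general n k t hv hedge hmax
end

section
/- Let s, t be two paths of the same length k in the branching graph, and write x^{(i)} = φ_n(s(i)), y^{(i)} = φ_n(t(i)). Suppose s ≈_n t (they have the same n-residue vector, equivalently x^{(i)} and y^{(i)} change in coordinates with equal values at every step as in Lemma 'reflectionystuff'). If x^{(i)} = y^{(i)} for some i but x^{(i+1)} ≠ y^{(i+1)}, then x^{(i)} lies on the j-th wall for some j ≥ 1 and y^{(i+1)} = s_{0,j}(x^{(i+1)}). -/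
/-
If `x = y` and then both move by the same `δ`, in coordinates `u ≠ v`, to the same value, then
`x u = x v`. The tail of `x` is strictly decreasing, so one of `u`, `v` is `0` and the other
is some `j ≥ 1`; thus `x` is on the `j`-th wall, and since `swap0 j` fixes `x` and exchanges
`eps 0` with `eps j`, it carries one step to the other.
-/

theorem StrictTail.strictAntiOn {x : ℕ → ℤ} (hx : StrictTail x) : StrictAntiOn x (Set.Ici 1) :=
  strictAntiOn_of_succ_lt Set.ordConnected_Ici fun a _ ha _ => by simpa using hx a ha

theorem StrictTail.eq_zero_or_eq_zero_of_apply_eq {x : ℕ → ℤ} (hx : StrictTail x) {u v : ℕ}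
    (huv : u ≠ v) (h : x u = x v) : u = 0 ∨ v = 0 := by
  by_contra! hne
  exact huv <| hx.strictAntiOn.injOn (Nat.one_le_iff_ne_zero.2 hne.1)
    (Nat.one_le_iff_ne_zero.2 hne.2) h

theorem swap0_add_smul_eps_zero {x : ℕ → ℤ} {j : ℕ} (hx : x 0 = x j) (δ : ℤ) :
    swap0 j (x + δ • eps 0) = x + δ • eps j := by
  funext i
  simp only [swap0, eps, Pi.add_apply, Pi.smul_apply, smul_eq_mul]
  split_ifs <;> simp_all

theorem swap0_add_smul_eps_self {x : ℕ → ℤ} {j : ℕ} (hx : x 0 = x j) (δ : ℤ) :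
    swap0 j (x + δ • eps j) = x + δ • eps 0 := by
  funext i
  simp only [swap0, eps, Pi.add_apply, Pi.smul_apply, smul_eq_mul]
  split_ifs <;> simp_all

theorem stmt18_general (x y x' y' : ℕ → ℤ) (u v : ℕ) (δ : ℤ)
    (hxt : StrictTail x)
    (hx' : x' = fun m => x m + δ * eps u m) (hy' : y' = fun m => y m + δ * eps v m)
    (hres : x' u = y' v)
    (heq : x = y) (hne : x' ≠ y') :
    ∃ j, 1 ≤ j ∧ OnWall x j ∧ y' = swap0 j x' := by
  subst heq
  replace hx' : x' = x + δ • eps u := hx'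
  replace hy' : y' = x + δ • eps v := hy'
  subst hx' hy'
  have huv : x u = x v := by simpa [eps] using hres
  have hne : u ≠ v := by rintro rfl; exact hne rfl
  rcases hxt.eq_zero_or_eq_zero_of_apply_eq hne huv with rfl | rfl
  · have hv : 1 ≤ v := Nat.one_le_iff_ne_zero.2 hne.symm
    exact ⟨v, hv, ⟨hv, huv⟩, (swap0_add_smul_eps_zero huv δ).symm⟩
  · have hu : 1 ≤ u := Nat.one_le_iff_ne_zero.2 hne
    exact ⟨u, hu, ⟨hu, huv.symm⟩, (swap0_add_smul_eps_self huv.symm δ).symm⟩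

theorem stmt18 (x y x' y' : ℕ → ℤ) (u v : ℕ) (δ : ℤ) (hδ : δ = 1 ∨ δ = -1)
    (hxt : StrictTail x)
    (hx' : x' = fun m => x m + δ * eps u m) (hy' : y' = fun m => y m + δ * eps v m)
    (hres : x' u = y' v)
    (heq : x = y) (hne : x' ≠ y') :
    ∃ j, 1 ≤ j ∧ OnWall x j ∧ y' = swap0 j x' :=
  stmt18_general x y x' y' u v δ hxt hx' hy' hres heq hne
end
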